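/- arXiv:2210.06056 — 4 statements merged into one kernel-verified Lean document; each statement's English description precedes it below -/
import Mathlib

section
/- For integers c_1 ≥ 1 and c_2, …, c_k ≥ 2, the left q-deformed Euler continuant E^♭_k(c_1,…,c_k)_q is a polynomial in q with integer coefficients whose degree equals c_1 + c_2 + ⋯ + c_k − k + 1. -/
noncomputable section

/-- The field ℚ(q) of rational functions over ℚ. -/
abbrev K : Type := RatFunc ℚ

/-- The variable q. -/
def q : K := RatFunc.X

/-- Right q-integer `[n]^♯` with deformation parameter `x`. -/
def qsX (x : K) (n : ℤ) : K := (1 - x ^ n) / (1 - x)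

/-- Left q-integer `[n]^♭` with deformation parameter `x`. -/
def qfX (x : K) (n : ℤ) : K := (1 - x ^ (n - 1) + x ^ n - x ^ (n + 1)) / (1 - x)

/-- Right q-integer `[n]^♯_q`. -/
def qs (n : ℤ) : K := qsX q n

/-- Left q-integer `[n]^♭_q`. -/
def qf (n : ℤ) : K := qfX q n

/-- Right q-deformed Euler continuant `E^♯` (first-row expansion of the
tridiagonal determinant), with parameter `x`. -/
def EsharpX (x : K) : List ℤ → K
  | [] => 1
  | [c] => qsX x c
  | c :: d :: rest => qsX x c * EsharpX x (d :: rest) - x ^ (c - 1) * EsharpX x rest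

/-- Left q-deformed Euler continuant `E^♭` (first-row expansion of the
tridiagonal determinant whose (k,k) entry is the left q-integer), with parameter `x`. -/
def EflatX (x : K) : List ℤ → K
  | [] => 1
  | [c] => qfX x c
  | c :: d :: rest => qsX x c * EflatX x (d :: rest) - x ^ (c - 1) * EflatX x rest

def Esharp (L : List ℤ) : K := EsharpX q L

def Eflat (L : List ℤ) : K := EflatX q L

/-- `E^♯_{j-1}(d_2,…,d_j)` for the input list `(d_1,…,d_j)`, with the
convention `E^♯_{-1}() = 0` when the list is empty. -/
def EsharpD : List ℤ → K
  | [] => 0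
  | _ :: rest => Esharp rest

/-- `E^♭_{j-1}(d_2,…,d_j)` for the input list `(d_1,…,d_j)`, with the
convention `E^♭_{-1}() = 1 - q` when the list is empty. -/
def EflatD : List ℤ → K
  | [] => 1 - q
  | _ :: rest => Eflat rest

/-- Left q-deformed negative continued fraction `[[c_1,…,c_k]]^♭_q`. -/
def nflat : List ℤ → K
  | [] => 0
  | [c] => qf c
  | c :: d :: rest => qs c - q ^ (c - 1) / nflat (d :: rest)

/-- Right q-deformed negative continued fraction `[[c_1,…,c_k]]^♯_q`. -/
def nsharp : List ℤ → K
  | [] => 0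
  | [c] => qs c
  | c :: d :: rest => qs c - q ^ (c - 1) / nsharp (d :: rest)

/-- Left q-deformed regular continued fraction, with alternating parameter `x`, `x⁻¹`. -/
def regFlatX : K → List ℤ → K
  | _, [] => 0
  | x, [a] => qfX x a
  | x, a :: d :: rest => qsX x a + x ^ a / regFlatX x⁻¹ (d :: rest)

/-- Left q-deformed regular continued fraction `[a_1,…,a_{2m}]^♭_q`. -/
def regFlat (L : List ℤ) : K := regFlatX q L

/-- Classical negative continued fraction `[[c_1,…,c_k]] ∈ ℚ`. -/
def negCF : List ℤ → ℚ
  | [] => 0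
  | [c] => c
  | c :: d :: rest => c - 1 / negCF (d :: rest)

/-- Classical regular continued fraction `[a_1,…,a_{2m}] ∈ ℚ`. -/
def regCF : List ℤ → ℚ
  | [] => 0
  | [a] => a
  | a :: d :: rest => a + 1 / regCF (d :: rest)

/-- The matrix σ_{1,q} as an invertible 2×2 matrix over ℚ(q). -/
def σ1 : (Matrix (Fin 2) (Fin 2) K)ˣ where
  val := !![q⁻¹, -q⁻¹; 0, 1]
  inv := !![q, 1; 0, 1]
  val_inv := by
    have hq : (q : K) ≠ 0 := RatFunc.X_ne_zero
    ext i j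
    fin_cases i <;> fin_cases j <;>
      simp [Matrix.mul_apply, Fin.sum_univ_two, inv_mul_cancel₀ hq]
  inv_val := by
    have hq : (q : K) ≠ 0 := RatFunc.X_ne_zero
    ext i j
    fin_cases i <;> fin_cases j <;>
      simp [Matrix.mul_apply, Fin.sum_univ_two, mul_inv_cancel₀ hq]

/-- The matrix σ_{2,q} as an invertible 2×2 matrix over ℚ(q). -/
def σ2 : (Matrix (Fin 2) (Fin 2) K)ˣ where
  val := !![1, 0; 1, q⁻¹]
  inv := !![1, 0; -q, q]
  val_inv := by
    have hq : (q : K) ≠ 0 := RatFunc.X_ne_zero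
    ext i j
    fin_cases i <;> fin_cases j <;>
      simp [Matrix.mul_apply, Fin.sum_univ_two, inv_mul_cancel₀ hq]
  inv_val := by
    have hq : (q : K) ≠ 0 := RatFunc.X_ne_zero
    ext i j
    fin_cases i <;> fin_cases j <;>
      simp [Matrix.mul_apply, Fin.sum_univ_two, mul_inv_cancel₀ hq]

/-- The matrix S_q as an invertible 2×2 matrix over ℚ(q). -/
def Sq : (Matrix (Fin 2) (Fin 2) K)ˣ where
  val := !![0, -q⁻¹; 1, 0]
  inv := !![0, 1; -q, 0]
  val_inv := by
    have hq : (q : K) ≠ 0 := RatFunc.X_ne_zero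
    ext i j
    fin_cases i <;> fin_cases j <;>
      simp [Matrix.mul_apply, Fin.sum_univ_two, inv_mul_cancel₀ hq]
  inv_val := by
    have hq : (q : K) ≠ 0 := RatFunc.X_ne_zero
    ext i j
    fin_cases i <;> fin_cases j <;>
      simp [Matrix.mul_apply, Fin.sum_univ_two, mul_inv_cancel₀ hq]

/-- The product σ_{1,q}^{-c_1}·S_q·σ_{1,q}^{-c_2}·S_q⋯σ_{1,q}^{-c_k}·S_q. -/
def prodCS : List ℤ → (Matrix (Fin 2) (Fin 2) K)ˣ
  | [] => 1
  | c :: rest => σ1 ^ (-c) * Sq * prodCS rest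

/-- The product σ_{1,q}^{-a_1}·σ_{2,q}^{a_2}⋯σ_{1,q}^{-a_{2m-1}}·σ_{2,q}^{a_{2m}}. -/
def prodReg : List ℤ → (Matrix (Fin 2) (Fin 2) K)ˣ
  | [] => 1
  | [a] => σ1 ^ (-a)
  | a :: b :: rest => σ1 ^ (-a) * σ2 ^ b * prodReg rest

/-- The sum a_2 + a_4 + ⋯ of the even-indexed entries. -/
def evenSum : List ℤ → ℤ
  | [] => 0
  | [_] => 0
  | _ :: b :: rest => b + evenSum rest

/-- Möbius action of a 2×2 matrix on ℚ(q). -/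
def mobius (A : Matrix (Fin 2) (Fin 2) K) (x : K) : K :=
  (A 0 0 * x + A 0 1) / (A 1 0 * x + A 1 1)

/-! ### Auxiliary machinery for Statement 13 -/

open Polynomial in
/-- The ring homomorphism ℤ[X] → ℚ(q) sending X to q. -/
def phi : Polynomial ℤ →+* K :=
  (algebraMap (Polynomial ℚ) K).comp (Polynomial.mapRingHom (Int.castRingHom ℚ))

lemma phi_X : phi Polynomial.X = q := by
  simp [phi, q, RatFunc.algebraMap_X]

/-- Integer polynomial realizing the right q-integer. -/
def qpoly (c : ℤ) : Polynomial ℤ := ∑ i ∈ Finset.range c.toNat, Polynomial.X ^ i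

/-- Integer polynomial realizing the left q-integer. -/
def fpoly (c : ℤ) : Polynomial ℤ :=
  (∑ i ∈ Finset.range (c - 1).toNat, Polynomial.X ^ i) + Polynomial.X ^ c.toNat

/-- Integer polynomial realizing the left continuant. -/
def Ppoly : List ℤ → Polynomial ℤ
  | [] => 1
  | [c] => fpoly c
  | c :: d :: rest => qpoly c * Ppoly (d :: rest) - Polynomial.X ^ (c - 1).toNat * Ppoly rest

/-- Expected degree. -/
def Dg : List ℤ → ℤ
  | [] => 0
  | c :: cs => c + cs.sum - cs.length

lemma one_sub_q_ne_zero : (1 : K) - q ≠ 0 := by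
  have hinj := IsFractionRing.injective (Polynomial ℚ) K
  intro h
  have h1 : (1 : K) = q := by linear_combination h
  have : (1 : Polynomial ℚ) = Polynomial.X := by
    apply hinj
    rw [map_one]
    simpa [q, RatFunc.algebraMap_X] using h1
  have := congrArg (Polynomial.coeff · 1) this
  simp [Polynomial.coeff_one] at this

lemma zpow_toNat (n : ℤ) (hn : 0 ≤ n) : q ^ n = q ^ n.toNat := by
  conv_lhs => rw [← Int.toNat_of_nonneg hn]
  exact zpow_natCast q n.toNat

lemma geom_phi (n : ℕ) :
    phi (∑ i ∈ Finset.range n, Polynomial.X ^ i) = ∑ i ∈ Finset.range n, q ^ i := by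
  rw [map_sum]
  exact Finset.sum_congr rfl fun i _ => by rw [map_pow, phi_X]

lemma geom_mul (n : ℕ) : (∑ i ∈ Finset.range n, q ^ i) * (1 - q) = 1 - q ^ n := by
  have := geom_sum_mul q n
  linear_combination -this

lemma qs_eq (c : ℤ) (hc : 1 ≤ c) : qs c = phi (qpoly c) := by
  rw [qs, qsX, zpow_toNat c (by omega), qpoly, geom_phi, ← geom_mul,
    mul_div_cancel_right₀ _ one_sub_q_ne_zero]

lemma qf_eq (c : ℤ) (hc : 1 ≤ c) : qf c = phi (fpoly c) := by
  have h1 : c - 1 + 1 = c := by ring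
  have hcn : ((c - 1).toNat : ℤ) + 1 = c := by omega
  have hn : c.toNat = (c - 1).toNat + 1 := by omega
  rw [qf, qfX, fpoly, map_add, geom_phi, map_pow, phi_X]
  rw [div_eq_iff one_sub_q_ne_zero, add_mul, geom_mul]
  rw [zpow_toNat (c - 1) (by omega), zpow_toNat c (by omega), zpow_toNat (c + 1) (by omega)]
  have h2 : (c + 1).toNat = c.toNat + 1 := by omega
  rw [h2, hn]
  ring

lemma geom_natDegree (n : ℕ) (hn : n ≠ 0) :
    (∑ i ∈ Finset.range n, (Polynomial.X : Polynomial ℤ) ^ i).natDegree = n - 1 := by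
  apply le_antisymm
  · apply Polynomial.natDegree_sum_le_of_forall_le
    intro i hi
    rw [Polynomial.natDegree_X_pow]
    exact Nat.le_sub_one_of_lt (Finset.mem_range.mp hi)
  · apply Polynomial.le_natDegree_of_ne_zero
    rw [Polynomial.finset_sum_coeff]
    have : ∀ i ∈ Finset.range n, ((Polynomial.X : Polynomial ℤ) ^ i).coeff (n - 1)
        = if i = n - 1 then 1 else 0 := by
      intro i _
      rw [Polynomial.coeff_X_pow]
      simp [eq_comm]
    rw [Finset.sum_congr rfl this, Finset.sum_ite_eq' (Finset.range n) (n - 1) (fun _ => (1 : ℤ))]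
    simp [Finset.mem_range, Nat.sub_lt (Nat.pos_of_ne_zero hn)]

lemma geom_natDegree_le (n : ℕ) :
    (∑ i ∈ Finset.range n, (Polynomial.X : Polynomial ℤ) ^ i).natDegree ≤ n - 1 := by
  apply Polynomial.natDegree_sum_le_of_forall_le
  intro i hi
  rw [Polynomial.natDegree_X_pow]
  exact Nat.le_sub_one_of_lt (Finset.mem_range.mp hi)

lemma qpoly_monic (c : ℤ) (hc : 1 ≤ c) : (qpoly c).Monic :=
  Polynomial.monic_geom_sum_X (by omega : c.toNat ≠ 0)

lemma qpoly_natDegree (c : ℤ) (hc : 1 ≤ c) : ((qpoly c).natDegree : ℤ) = c - 1 := by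
  rw [qpoly, geom_natDegree c.toNat (by omega)]
  omega

lemma fpoly_monic (c : ℤ) (hc : 1 ≤ c) : (fpoly c).Monic := by
  rw [fpoly, add_comm]
  apply (Polynomial.monic_X_pow c.toNat).add_of_left
  apply lt_of_le_of_lt (Polynomial.degree_le_natDegree)
  rw [Polynomial.degree_X_pow]
  exact_mod_cast lt_of_le_of_lt (geom_natDegree_le _) (by omega)

lemma fpoly_natDegree (c : ℤ) (hc : 1 ≤ c) : ((fpoly c).natDegree : ℤ) = c := by
  rw [fpoly, add_comm, Polynomial.natDegree_add_eq_left_of_natDegree_lt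
    (by rw [Polynomial.natDegree_X_pow]; exact lt_of_le_of_lt (geom_natDegree_le _) (by omega)),
    Polynomial.natDegree_X_pow]
  omega

lemma Dg_lt (d : ℤ) (hd : 2 ≤ d) (rest : List ℤ) : Dg rest < Dg (d :: rest) := by
  cases rest with
  | nil => simp [Dg]; omega
  | cons e rs => simp [Dg, List.sum_cons, List.length_cons]; omega

theorem Eflat_key : ∀ (L : List ℤ), (∀ x ∈ L, 1 ≤ x) → (∀ x ∈ L.tail, 2 ≤ x) →
    (Ppoly L).Monic ∧ ((Ppoly L).natDegree : ℤ) = Dg L ∧ Eflat L = phi (Ppoly L)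
  | [], _, _ => by
    refine ⟨Polynomial.monic_one, by simp [Ppoly, Dg], ?_⟩
    simp [Eflat, EflatX, Ppoly]
  | [c], h1, _ => by
    have hc : 1 ≤ c := h1 c (by simp)
    refine ⟨fpoly_monic c hc, ?_, ?_⟩
    · rw [Ppoly, fpoly_natDegree c hc]; simp [Dg]
    · rw [Ppoly]
      exact qf_eq c hc
  | c :: d :: rest, h1, h2 => by
    have hc : 1 ≤ c := h1 c (by simp)
    have hd : 2 ≤ d := h2 d (by simp)
    have ih1 := Eflat_key (d :: rest)
      (fun x hx => by have := h2 x (by simpa using hx); omega)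
      (fun x hx => h2 x (by simp at hx ⊢; tauto))
    have ih2 := Eflat_key rest
      (fun x hx => by have := h2 x (by simp [hx]); omega)
      (fun x hx => h2 x (by simp [List.mem_of_mem_tail hx]))
    obtain ⟨m1, d1, e1⟩ := ih1
    obtain ⟨m2, d2, e2⟩ := ih2
    have hqm := qpoly_monic c hc
    have hA : (qpoly c * Ppoly (d :: rest)).Monic := hqm.mul m1
    have hAdeg : ((qpoly c * Ppoly (d :: rest)).natDegree : ℤ) = (c - 1) + Dg (d :: rest) := by
      rw [hqm.natDegree_mul m1]
      push_cast
      rw [qpoly_natDegree c hc, d1]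
    have hB : (Polynomial.X ^ (c - 1).toNat * Ppoly rest).Monic :=
      (Polynomial.monic_X_pow _).mul m2
    have hBdeg : ((Polynomial.X ^ (c - 1).toNat * Ppoly rest).natDegree : ℤ)
        = (c - 1) + Dg rest := by
      rw [(Polynomial.monic_X_pow _).natDegree_mul m2, Polynomial.natDegree_X_pow]
      push_cast
      rw [d2]
      omega
    have hlt : (Polynomial.X ^ (c - 1).toNat * Ppoly rest).natDegree
        < (qpoly c * Ppoly (d :: rest)).natDegree := by
      have := Dg_lt d hd rest
      omega
    refine ⟨?_, ?_, ?_⟩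
    · rw [Ppoly]
      exact hA.sub_of_left (Polynomial.degree_lt_degree hlt)
    · rw [Ppoly, Polynomial.natDegree_sub_eq_left_of_natDegree_lt hlt, hAdeg]
      simp only [Dg, List.sum_cons, List.length_cons]
      push_cast
      ring
    · have hrec : Eflat (c :: d :: rest)
          = qs c * Eflat (d :: rest) - q ^ (c - 1) * Eflat rest := by
        simp [Eflat, EflatX, qs]
      rw [hrec, Ppoly, map_sub, map_mul, map_mul, ← qs_eq c hc, ← e1, ← e2,
        map_pow, phi_X, ← zpow_toNat (c - 1) (by omega)]
termination_by L => L.length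
decreasing_by all_goals simp <;> omega

/-- the left q-deformed Euler continuant is a polynomial in q with
integer coefficients of degree c_1 + ⋯ + c_k − k + 1. -/
theorem Eflat_is_polynomial (c1 : ℤ) (cs : List ℤ)
    (hc1 : 1 ≤ c1) (hcs : ∀ x ∈ cs, 2 ≤ x) :
    ∃ P : Polynomial ℤ, P ≠ 0 ∧
      (P.natDegree : ℤ) = (c1 :: cs).sum - ((c1 :: cs).length : ℤ) + 1 ∧
      Eflat (c1 :: cs)
        = algebraMap (Polynomial ℚ) K (P.map (Int.castRingHom ℚ)) := by
  obtain ⟨hmon, hdeg, heq⟩ := Eflat_key (c1 :: cs)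
    (fun x hx => by
      simp at hx
      rcases hx with h | h
      · omega
      · have := hcs x h; omega)
    (fun x hx => hcs x (by simpa using hx))
  refine ⟨Ppoly (c1 :: cs), hmon.ne_zero, ?_, heq⟩
  rw [hdeg]
  simp [Dg, List.sum_cons, List.length_cons]
  ring
end
end

section
/- For any integers c_1, …, c_k (k ≥ 1), the matrix product σ_{1,q}^{−c_1}S_q·σ_{1,q}^{−c_2}S_q·⋯·σ_{1,q}^{−c_k}S_q in GL_2(ℚ(q)) equals the matrix whose first row is (E^♯_k(c_1,…,c_k)_q, −q^{c_k−1}·E^♯_{k−1}(c_1,…,c_{k−1})_q) and whose second row is (E^♯_{k−1}(c_2,…,c_k)_q, −q^{c_k−1}·E^♯_{k−2}(c_2,…,c_{k−1})_q). -/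
noncomputable section

/-! Each factor is `σ_{1,q}^{-c} S_q = !![[c]^♯_q, -q^{c-1}; 1, 0]`, since `σ_{1,q}^{-n}` acts as the
affine map `x ↦ q^n x + [n]^♯_q`. Left multiplication by this factor is exactly the first-row
recurrence `E^♯(c :: L) = [c]^♯_q E^♯(L) - q^{c-1} E^♯(tail L)`, so the formula follows by
induction on the list. -/

lemma q_ne_zero : q ≠ 0 := RatFunc.X_ne_zero

lemma q_ne_one : q ≠ 1 := by
  intro h
  have : (Polynomial.X : Polynomial ℚ) = Polynomial.C 1 :=
    RatFunc.algebraMap_injective ℚ (by simpa [q, RatFunc.algebraMap_X] using h)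
  exact Polynomial.X_ne_C 1 this

lemma qsX_zero (x : K) : qsX x 0 = 0 := by
  simp [qsX]

lemma qsX_add_one {x : K} (hx0 : x ≠ 0) (hx1 : x ≠ 1) (n : ℤ) :
    qsX x (n + 1) = qsX x n + x ^ n := by
  have hx1' : 1 - x ≠ 0 := sub_ne_zero.mpr hx1.symm
  rw [qsX, qsX, zpow_add_one₀ hx0]
  field_simp
  ring

lemma val_σ1_inv : ((σ1⁻¹ : (Matrix (Fin 2) (Fin 2) K)ˣ) : Matrix (Fin 2) (Fin 2) K)
    = !![q, 1; 0, 1] := rfl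

lemma val_Sq : (Sq : Matrix (Fin 2) (Fin 2) K) = !![0, -q⁻¹; 1, 0] := rfl

lemma qAffine_mul_σ1_inv (n : ℤ) :
    !![q ^ n, qs n; 0, 1] * ((σ1⁻¹ : (Matrix (Fin 2) (Fin 2) K)ˣ) : Matrix (Fin 2) (Fin 2) K)
      = !![q ^ (n + 1), qs (n + 1); 0, 1] := by
  rw [val_σ1_inv, Matrix.mul_fin_two, qs, qs, qsX_add_one q_ne_zero q_ne_one,
    zpow_add_one₀ q_ne_zero]
  simp only [mul_one, mul_zero, zero_mul, add_zero, zero_add]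
  rw [add_comm]

lemma val_σ1_zpow_neg (n : ℤ) :
    ((σ1 ^ (-n) : (Matrix (Fin 2) (Fin 2) K)ˣ) : Matrix (Fin 2) (Fin 2) K)
      = !![q ^ n, qs n; 0, 1] := by
  induction n using Int.induction_on with
  | zero => simp [qs, qsX_zero, Matrix.one_fin_two]
  | succ m ih =>
    rw [neg_add, zpow_add, zpow_neg_one, Units.val_mul, ih, qAffine_mul_σ1_inv]
  | pred m ih =>
    have hstep : σ1 ^ (-(-(m : ℤ) - 1)) = σ1 ^ (-(-(m : ℤ) - 1 + 1)) * σ1 := by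
      rw [← zpow_add_one]; ring_nf
    have hback := qAffine_mul_σ1_inv (-(m : ℤ) - 1)
    rw [sub_add_cancel] at hback
    rw [hstep, Units.val_mul, sub_add_cancel, ih, ← hback, mul_assoc, ← Units.val_mul,
      inv_mul_cancel, Units.val_one, mul_one]

lemma val_σ1_zpow_neg_mul_Sq (c : ℤ) :
    ((σ1 ^ (-c) * Sq : (Matrix (Fin 2) (Fin 2) K)ˣ) : Matrix (Fin 2) (Fin 2) K)
      = !![qs c, -q ^ (c - 1); 1, 0] := by
  rw [Units.val_mul, val_σ1_zpow_neg, val_Sq, Matrix.mul_fin_two, zpow_sub_one₀ q_ne_zero]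
  simp only [mul_zero, mul_one, zero_mul, zero_add, add_zero, mul_neg, neg_zero]

lemma Esharp_cons (c : ℤ) (L : List ℤ) :
    Esharp (c :: L) = qs c * Esharp L - q ^ (c - 1) * EsharpD L := by
  cases L <;> simp [Esharp, EsharpX, EsharpD, qs]

/-- the matrix product σ_{1,q}^{-c_1}S_q⋯σ_{1,q}^{-c_k}S_q in terms of
right q-deformed Euler continuants (with the convention `E^♯_{-1}() = 0`). -/
theorem prodCS_entries (c1 : ℤ) (cs : List ℤ) :
    (prodCS (c1 :: cs) : Matrix (Fin 2) (Fin 2) K)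
      = !![Esharp (c1 :: cs),
           -q ^ ((c1 :: cs).getLast! - 1) * Esharp ((c1 :: cs).dropLast);
           Esharp cs,
           -q ^ ((c1 :: cs).getLast! - 1) * EsharpD ((c1 :: cs).dropLast)] := by
  induction cs generalizing c1 with
  | nil =>
    rw [prodCS, prodCS, mul_one, val_σ1_zpow_neg_mul_Sq]
    simp [Esharp, EsharpX, EsharpD, List.getLast!, qs]
  | cons c2 cs ih =>
    have hlast : (c1 :: c2 :: cs).getLast! = (c2 :: cs).getLast! := rfl
    have hinit : (c1 :: c2 :: cs).dropLast = c1 :: (c2 :: cs).dropLast := rfl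
    rw [prodCS, Units.val_mul, val_σ1_zpow_neg_mul_Sq, ih, hlast, hinit, Matrix.mul_fin_two,
      Esharp_cons c1 (c2 :: cs), Esharp_cons c1 (c2 :: cs).dropLast, EsharpD, EsharpD]
    congr 1; ring_nf
end
end

section
/- Let a_1 ≥ 0, a_2, …, a_{2m} ≥ 1 and c_1 ≥ 1, c_2, …, c_k ≥ 2 be integers such that the classical continued fraction values coincide in ℚ: [a_1,…,a_{2m}] = [[c_1,…,c_k]]. Then in GL_2(ℚ(q)) one has q^{a_2 + a_4 + ⋯ + a_{2m}}·σ_{1,q}^{−a_1}σ_{2,q}^{a_2}σ_{1,q}^{−a_3}σ_{2,q}^{a_4}⋯σ_{1,q}^{−a_{2m−1}}σ_{2,q}^{a_{2m}} = σ_{1,q}^{−c_1}S_q·σ_{1,q}^{−c_2}S_q·⋯·σ_{1,q}^{−c_k}S_q·σ_{1,q}^{−1}. -/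
noncomputable section

def qU : Kˣ := Units.mk0 q RatFunc.X_ne_zero

abbrev Mu : Type := (Matrix (Fin 2) (Fin 2) K)ˣ

def Qm : Mu := Units.map (algebraMap K (Matrix (Fin 2) (Fin 2) K)).toMonoidHom qU

lemma Qm_val (z : ℤ) : ((Qm ^ z : Mu) : Matrix (Fin 2) (Fin 2) K)
    = algebraMap K (Matrix (Fin 2) (Fin 2) K) (q ^ z) := by
  have : (Qm ^ z : Mu) = Units.map (algebraMap K (Matrix (Fin 2) (Fin 2) K)).toMonoidHom (qU ^ z) := by
    rw [map_zpow]; rfl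
  rw [this]
  show algebraMap K (Matrix (Fin 2) (Fin 2) K) ((qU ^ z : Kˣ) : K) = _
  rw [Units.val_zpow_eq_zpow_val]
  rfl

lemma Qm_comm (u : Mu) : Commute Qm u := by
  apply Units.ext
  show algebraMap K _ q * (u : Matrix (Fin 2) (Fin 2) K) = _
  exact Algebra.commutes q _

def T : Mu := σ1⁻¹ * Sq

lemma hq : (q : K) ≠ 0 := RatFunc.X_ne_zero

lemma h1 : Qm * σ2 = T * σ1⁻¹ := by
  apply Units.ext
  show algebraMap K (Matrix (Fin 2) (Fin 2) K) q * (σ2 : Matrix (Fin 2) (Fin 2) K)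
      = ((↑σ1⁻¹ : Matrix (Fin 2) (Fin 2) K) * (↑Sq : Matrix (Fin 2) (Fin 2) K)) * (↑σ1⁻¹ : Matrix (Fin 2) (Fin 2) K)
  show algebraMap K (Matrix (Fin 2) (Fin 2) K) q * !![1, 0; 1, q⁻¹] = (!![q, 1; 0, 1] * !![0, -q⁻¹; 1, 0]) * !![q, 1; 0, 1]
  rw [Algebra.algebraMap_eq_smul_one]
  ext i j
  fin_cases i <;> fin_cases j <;>
    simp [Matrix.mul_apply, Fin.sum_univ_two, mul_inv_cancel₀ hq]
lemma pow_block (n : ℕ) : (Qm * σ2) ^ (n + 1) = T * (σ1⁻¹ * T) ^ n * σ1⁻¹ := by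
  induction n with
  | zero => simpa using h1
  | succ n ih =>
    rw [pow_succ, ih, h1, pow_succ]
    group

lemma prodCS_append (l1 l2 : List ℤ) : prodCS (l1 ++ l2) = prodCS l1 * prodCS l2 := by
  induction l1 with
  | nil => simp [prodCS]
  | cons c t ih => simp [prodCS, ih, mul_assoc]

lemma prodCS_replicate (n : ℕ) : prodCS (List.replicate n 2) = (σ1⁻¹ * T) ^ n := by
  induction n with
  | zero => simp [prodCS]
  | succ n ih =>
    rw [List.replicate_succ]
    show σ1 ^ (-2 : ℤ) * Sq * prodCS (List.replicate n 2) = _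
    rw [ih, pow_succ']
    have : σ1 ^ (-2 : ℤ) * Sq = σ1⁻¹ * T := by
      show σ1 ^ (-2 : ℤ) * Sq = σ1⁻¹ * (σ1⁻¹ * Sq)
      group
    rw [this, mul_assoc]

/-- The q-central commuting lemma for zpow. -/
lemma Qm_zpow_comm (z : ℤ) (u : Mu) : Qm ^ z * u = u * Qm ^ z :=
  ((Qm_comm u).zpow_left z).eq

/-- Validity: even-length list, entries at even positions ≥ 1. -/
def Ok : List ℤ → Prop
  | [] => True
  | [_] => False
  | _ :: b :: rest => 1 ≤ b ∧ Ok rest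

/-- Canonical conversion, with head shifted by +2. -/
def toNegAux : List ℤ → List ℤ
  | [] => []
  | [a] => [a]
  | a :: b :: rest => (a + 2) :: (List.replicate (b - 1).toNat 2 ++ toNegAux rest)

lemma zpow_block (b : ℤ) (hb : 1 ≤ b) :
    Qm ^ b * σ2 ^ b = T * (σ1⁻¹ * T) ^ (b - 1).toNat * σ1⁻¹ := by
  obtain ⟨n, rfl⟩ : ∃ n : ℕ, b = (n : ℤ) + 1 := ⟨(b - 1).toNat, by omega⟩
  have h1' : ((n : ℤ) + 1 - 1).toNat = n := by omega
  rw [h1']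
  have h2' : ((n : ℤ) + 1) = ((n + 1 : ℕ) : ℤ) := by push_cast; ring
  rw [h2', zpow_natCast, zpow_natCast, ← Commute.mul_pow (Qm_comm σ2), pow_block]

lemma mv (z : ℤ) (u v : Mu) : u * (Qm ^ z * v) = Qm ^ z * (u * v) := by
  rw [← mul_assoc, ← Qm_zpow_comm, mul_assoc]

lemma central_shuffle (b e : ℤ) (A B R : Mu) :
    Qm ^ (b + e) * (A * B ^ b * R) = A * (Qm ^ b * B ^ b) * (Qm ^ e * R) := by
  rw [zpow_add, mul_assoc, mv b A (B ^ b), mul_assoc (Qm ^ b) (A * B ^ b),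
    mv e (A * B ^ b) R]

lemma glue (a : ℤ) (P C : Mu) :
    σ1 ^ (-a) * (T * P * σ1⁻¹) * (σ1 * C * σ1⁻¹)
      = σ1 * (σ1 ^ (-(a + 2)) * Sq * (P * C)) * σ1⁻¹ := by
  have h : σ1 * σ1 ^ (-(a + 2)) = σ1 ^ (-a) * σ1⁻¹ :=
    calc σ1 * σ1 ^ (-(a + 2)) = σ1 ^ (1 : ℤ) * σ1 ^ (-(a + 2)) := by rw [zpow_one]
      _ = σ1 ^ (1 + -(a + 2)) := (zpow_add σ1 1 _).symm
      _ = σ1 ^ (-a + -1) := by rw [show (1 + -(a + 2) : ℤ) = -a + -1 by ring]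
      _ = σ1 ^ (-a) * σ1 ^ (-1 : ℤ) := zpow_add σ1 _ _
      _ = σ1 ^ (-a) * σ1⁻¹ := by rw [zpow_neg_one]
  rw [show T = σ1⁻¹ * Sq from rfl]
  simp only [mul_assoc, inv_mul_cancel_left]
  rw [← mul_assoc σ1 (σ1 ^ (-(a + 2))), h]
  simp only [mul_assoc]

lemma prodCS_cons (c : ℤ) (L : List ℤ) :
    prodCS (c :: L) = σ1 ^ (-c) * Sq * prodCS L := rfl

theorem matAux : ∀ (a b : ℤ) (rest : List ℤ), Ok (a :: b :: rest) →
    Qm ^ evenSum (a :: b :: rest) * prodReg (a :: b :: rest)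
      = σ1 * prodCS (toNegAux (a :: b :: rest)) * σ1⁻¹
  | a, b, [], h => by
    obtain ⟨hb, -⟩ := h
    have hes : evenSum (a :: b :: ([] : List ℤ)) = b + 0 := by simp [evenSum]
    have hpr : prodReg (a :: b :: ([] : List ℤ)) = σ1 ^ (-a) * σ2 ^ b * prodReg [] := rfl
    have htn : toNegAux (a :: b :: ([] : List ℤ))
        = (a + 2) :: List.replicate (b - 1).toNat 2 := by
      simp [toNegAux]
    rw [hes, hpr, central_shuffle, zpow_block b hb, htn, prodCS_cons, prodCS_replicate]
    rw [show prodReg ([] : List ℤ) = 1 from rfl,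
      show (Qm ^ (0:ℤ) * 1 : Mu) = σ1 * 1 * σ1⁻¹ by group]
    rw [glue a ((σ1⁻¹ * T) ^ (b-1).toNat) 1, mul_one]
  | a, b, [x], h => absurd h.2 (fun hx => hx)
  | a, b, a' :: b' :: rest', h => by
    obtain ⟨hb, h'⟩ := h
    have ih := matAux a' b' rest' h'
    have hes : evenSum (a :: b :: a' :: b' :: rest')
        = b + evenSum (a' :: b' :: rest') := rfl
    have hpr : prodReg (a :: b :: a' :: b' :: rest')
        = σ1 ^ (-a) * σ2 ^ b * prodReg (a' :: b' :: rest') := rfl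
    have htn : toNegAux (a :: b :: a' :: b' :: rest')
        = (a + 2) :: (List.replicate (b - 1).toNat 2 ++ toNegAux (a' :: b' :: rest')) := rfl
    rw [hes, hpr, central_shuffle, zpow_block b hb, ih, htn, prodCS_cons, prodCS_append,
      prodCS_replicate, ← mul_assoc (σ1 ^ (-(a+2)) * Sq),
      glue a ((σ1⁻¹ * T) ^ (b-1).toNat) (prodCS (toNegAux (a' :: b' :: rest')))]
    simp only [mul_assoc]
lemma negCF_cons (x : ℤ) (L : List ℤ) (h : L ≠ []) :
    negCF (x :: L) = (x : ℚ) - 1 / negCF L := by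
  cases L with
  | nil => exact absurd rfl h
  | cons y t => rfl

lemma regCF_cons (x : ℤ) (L : List ℤ) (h : L ≠ []) :
    regCF (x :: L) = (x : ℚ) + 1 / regCF L := by
  cases L with
  | nil => exact absurd rfl h
  | cons y t => rfl

lemma negCF_gt_one : ∀ L : List ℤ, L ≠ [] → (∀ x ∈ L, 2 ≤ x) → 1 < negCF L
  | [c], _, h => by
    have : (2 : ℚ) ≤ (c : ℚ) := by exact_mod_cast h c (by simp)
    have : negCF [c] = (c : ℚ) := rfl
    simp only [this]; linarith
  | c :: d :: rest, _, h => by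
    have ht := negCF_gt_one (d :: rest) (by simp) (fun x hx => h x (by simp [hx]))
    have hc : (2 : ℚ) ≤ (c : ℚ) := by exact_mod_cast h c (by simp)
    have hrw : negCF (c :: d :: rest) = (c : ℚ) - 1 / negCF (d :: rest) := rfl
    have h0 : (0 : ℚ) < negCF (d :: rest) := by linarith
    have h1 : 1 / negCF (d :: rest) < 1 := by
      rw [div_lt_one h0]; linarith
    rw [hrw]; linarith

lemma regCF_pos : ∀ L : List ℤ, L ≠ [] → (∀ x ∈ L, 1 ≤ x) → 0 < regCF L
  | [a], _, h => by
    have : (1 : ℚ) ≤ (a : ℚ) := by exact_mod_cast h a (by simp)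
    have hrw : regCF [a] = (a : ℚ) := rfl
    rw [hrw]; linarith
  | a :: d :: rest, _, h => by
    have ht := regCF_pos (d :: rest) (by simp) (fun x hx => h x (by simp [hx]))
    have ha : (1 : ℚ) ≤ (a : ℚ) := by exact_mod_cast h a (by simp)
    have hrw : regCF (a :: d :: rest) = (a : ℚ) + 1 / regCF (d :: rest) := rfl
    rw [hrw]
    have : 0 < 1 / regCF (d :: rest) := by positivity
    linarith

lemma negCF_rep : ∀ n : ℕ, negCF (List.replicate (n + 1) 2) = ((n : ℚ) + 2) / ((n : ℚ) + 1)
  | 0 => by norm_num [negCF]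
  | n + 1 => by
    have ih := negCF_rep n
    rw [List.replicate_succ]
    rw [negCF_cons 2 _ (by simp)]
    rw [ih]
    have h1 : (0 : ℚ) < (n : ℚ) + 1 := by positivity
    have h2 : (0 : ℚ) < (n : ℚ) + 2 := by positivity
    field_simp
    push_cast
    ring

lemma negCF_rep_append : ∀ (n : ℕ) (c : ℤ) (L : List ℤ), 1 < negCF (c :: L) →
    negCF (List.replicate n 2 ++ c :: L)
      = (((n : ℚ) + 1) * (negCF (c :: L) - 1) + 1) / ((n : ℚ) * (negCF (c :: L) - 1) + 1)
  | 0, c, L, h => by simp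
  | n + 1, c, L, h => by
    have ih := negCF_rep_append n c L h
    set t : ℚ := negCF (c :: L) with ht
    have hs : 0 < t - 1 := by linarith
    have hd1 : (0 : ℚ) < (n : ℚ) * (t - 1) + 1 := by positivity
    have hd2 : (0 : ℚ) < ((n : ℚ) + 1) * (t - 1) + 1 := by positivity
    rw [List.replicate_succ, List.cons_append]
    rw [negCF_cons 2 _ (by simp)]
    rw [ih]
    push_cast
    rw [one_div_div, sub_div' (by positivity : ((↑n + 1) * (t - 1) + 1 : ℚ) ≠ 0)]
    rw [div_eq_div_iff (by positivity) (by positivity)]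
    ring
theorem valAux : ∀ (a b : ℤ) (rest : List ℤ), Ok (a :: b :: rest) →
    (∀ x ∈ b :: rest, 1 ≤ x) →
    negCF (toNegAux (a :: b :: rest)) = regCF (a :: b :: rest) + 1
  | a, b, [], h, hmem => by
    obtain ⟨hb, -⟩ := h
    have htn : toNegAux [a, b] = (a + 2) :: List.replicate (b - 1).toNat 2 := by
      simp [toNegAux]
    rw [htn]
    rcases Nat.eq_zero_or_pos (b - 1).toNat with hn | hn
    · have hb1 : b = 1 := by omega
      subst hb1
      norm_num [negCF, regCF]
      push_cast
      ring
    · obtain ⟨m, hm⟩ : ∃ m : ℕ, (b - 1).toNat = m + 1 := ⟨(b-1).toNat - 1, by omega⟩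
      have hbq : (b : ℚ) = (m : ℚ) + 2 := by
        have : b = (m : ℤ) + 2 := by omega
        rw [this]; push_cast; ring
      rw [hm, negCF_cons _ _ (by simp), negCF_rep m]
      have hreg : regCF [a, b] = (a : ℚ) + 1 / (b : ℚ) := by
        rw [regCF_cons a [b] (by simp), show regCF [b] = (b : ℚ) from rfl]
      rw [hreg, hbq, one_div_div]
      have h1 : (0 : ℚ) < (m : ℚ) + 1 := by positivity
      have h2 : (0 : ℚ) < (m : ℚ) + 2 := by positivity
      field_simp
      push_cast
      ring
  | a, b, [x], h, hmem => absurd h.2 (fun hx => hx)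
  | a, b, a' :: b' :: rest', h, hmem => by
    obtain ⟨hb, h'⟩ := h
    have hmem' : ∀ x ∈ b' :: rest', 1 ≤ x := fun x hx => hmem x (by simp [hx])
    have ih := valAux a' b' rest' h' hmem'
    have hpos : 0 < regCF (a' :: b' :: rest') :=
      regCF_pos _ (by simp) (fun x hx => hmem x (by simp at hx ⊢; tauto))
    set r : ℚ := regCF (a' :: b' :: rest') with hr
    have hsh : toNegAux (a' :: b' :: rest')
        = (a' + 2) :: (List.replicate (b' - 1).toNat 2 ++ toNegAux rest') := rfl
    have h1t : 1 < negCF ((a' + 2) :: (List.replicate (b' - 1).toNat 2 ++ toNegAux rest')) := by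
      rw [← hsh, ih]; linarith
    set n : ℕ := (b - 1).toNat with hn
    have hrep := negCF_rep_append n (a' + 2) _ h1t
    rw [← hsh] at hrep
    rw [ih] at hrep
    have htn : toNegAux (a :: b :: a' :: b' :: rest')
        = (a + 2) :: (List.replicate n 2 ++ toNegAux (a' :: b' :: rest')) := rfl
    rw [htn, negCF_cons _ _ (by rw [hsh]; simp), hrep]
    have hbq : (b : ℚ) = (n : ℚ) + 1 := by
      have : b = (n : ℤ) + 1 := by omega
      rw [this]; push_cast; ring
    have hreg : regCF (a :: b :: a' :: b' :: rest')
        = (a : ℚ) + 1 / ((b : ℚ) + 1 / r) := by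
      rw [regCF_cons a _ (by simp), regCF_cons b _ (by simp), ← hr]
    rw [hreg, hbq]
    have hs : (0 : ℚ) < r := hpos
    have hn0 : (0 : ℚ) ≤ (n : ℚ) := Nat.cast_nonneg n
    have hd1 : (0 : ℚ) < (n : ℚ) * (r + 1 - 1) + 1 := by nlinarith
    have hd2 : (0 : ℚ) < ((n : ℚ) + 1) * (r + 1 - 1) + 1 := by nlinarith
    have hd3 : (0 : ℚ) < (n : ℚ) + 1 + 1 / r := by positivity
    rw [one_div_div]
    have hd4 : (0:ℚ) < 1 + (n:ℚ) * r + r := by nlinarith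
    have hd5 : (0:ℚ) < (n + 1) * r + 1 := by nlinarith
    rw [show r + 1 - 1 = r by ring, show (n + 1 + 1 / r : ℚ) = ((n + 1) * r + 1) / r by field_simp, one_div_div]
    field_simp
    push_cast
    ring

theorem negCF_inj : ∀ (cs : List ℤ) (c : ℤ) (cs' : List ℤ) (c' : ℤ),
    (∀ x ∈ cs, 2 ≤ x) → (∀ x ∈ cs', 2 ≤ x) → negCF (c :: cs) = negCF (c' :: cs') →
    c :: cs = c' :: cs'
  | [], c, [], c', _, _, h => by
    have : (c : ℚ) = (c' : ℚ) := h
    have : c = c' := by exact_mod_cast this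
    rw [this]
  | [], c, d' :: L', c', h1, h2, h => by
    exfalso
    have ht' := negCF_gt_one (d' :: L') (by simp) h2
    have hrw : negCF (c' :: d' :: L') = (c' : ℚ) - 1 / negCF (d' :: L') := rfl
    have hc : (c : ℚ) = (c' : ℚ) - 1 / negCF (d' :: L') := by
      rw [← hrw]; exact h
    have h0 : (0 : ℚ) < 1 / negCF (d' :: L') := by positivity
    have h1' : 1 / negCF (d' :: L') < 1 := by
      rw [div_lt_one (by linarith)]; linarith
    have : (c' : ℚ) - 1 < (c : ℚ) := by linarith
    have : ((c' : ℤ) : ℚ) < ((c : ℤ) : ℚ) + 1 := by push_cast; linarith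
    have hlt : (c' : ℤ) < c + 1 := by exact_mod_cast this
    have : ((c : ℤ) : ℚ) < ((c' : ℤ) : ℚ) := by linarith
    have hlt2 : (c : ℤ) < c' := by exact_mod_cast this
    omega
  | d :: L, c, [], c', h1, h2, h => by
    exfalso
    have ht := negCF_gt_one (d :: L) (by simp) h1
    have hrw : negCF (c :: d :: L) = (c : ℚ) - 1 / negCF (d :: L) := rfl
    have hc : (c' : ℚ) = (c : ℚ) - 1 / negCF (d :: L) := by
      rw [← hrw]; exact h.symm
    have h0 : (0 : ℚ) < 1 / negCF (d :: L) := by positivity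
    have h1' : 1 / negCF (d :: L) < 1 := by
      rw [div_lt_one (by linarith)]; linarith
    have : ((c : ℤ) : ℚ) < ((c' : ℤ) : ℚ) + 1 := by push_cast; linarith
    have hlt : (c : ℤ) < c' + 1 := by exact_mod_cast this
    have : ((c' : ℤ) : ℚ) < ((c : ℤ) : ℚ) := by linarith
    have hlt2 : (c' : ℤ) < c := by exact_mod_cast this
    omega
  | d :: L, c, d' :: L', c', h1, h2, h => by
    have ht := negCF_gt_one (d :: L) (by simp) h1
    have ht' := negCF_gt_one (d' :: L') (by simp) h2
    have hrw : negCF (c :: d :: L) = (c : ℚ) - 1 / negCF (d :: L) := rfl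
    have hrw' : negCF (c' :: d' :: L') = (c' : ℚ) - 1 / negCF (d' :: L') := rfl
    rw [hrw, hrw'] at h
    have h0 : (0 : ℚ) < 1 / negCF (d :: L) := by positivity
    have h0' : (0 : ℚ) < 1 / negCF (d' :: L') := by positivity
    have hlt : 1 / negCF (d :: L) < 1 := by
      rw [div_lt_one (by linarith)]; linarith
    have hlt' : 1 / negCF (d' :: L') < 1 := by
      rw [div_lt_one (by linarith)]; linarith
    have hcc : c = c' := by
      have b1 : ((c : ℤ) : ℚ) < ((c' : ℤ) : ℚ) + 1 := by linarith
      have b2 : ((c' : ℤ) : ℚ) < ((c : ℤ) : ℚ) + 1 := by linarith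
      have b1' : (c : ℤ) < c' + 1 := by exact_mod_cast b1
      have b2' : (c' : ℤ) < c + 1 := by exact_mod_cast b2
      omega
    subst hcc
    have heq : negCF (d :: L) = negCF (d' :: L') := by
      have h' : 1 / negCF (d :: L) = 1 / negCF (d' :: L') := by linarith
      field_simp at h'
      linarith [h']
    have := negCF_inj L d L' d' (fun x hx => h1 x (by simp [hx]))
      (fun x hx => h2 x (by simp [hx])) heq
    rw [this]

lemma toNegAux_ge2 : ∀ l : List ℤ, Ok l → (∀ x ∈ l, 1 ≤ x) →
    ∀ x ∈ toNegAux l, 2 ≤ x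
  | [], _, _ => by simp [toNegAux]
  | [x], h, _ => absurd h (fun hx => hx)
  | a :: b :: rest, h, hmem => by
    intro x hx
    have hsh : toNegAux (a :: b :: rest)
        = (a + 2) :: (List.replicate (b - 1).toNat 2 ++ toNegAux rest) := rfl
    rw [hsh] at hx
    simp only [List.mem_cons, List.mem_append] at hx
    rcases hx with rfl | hx | hx
    · have : 1 ≤ a := hmem a (by simp)
      omega
    · have := List.eq_of_mem_replicate hx
      omega
    · exact toNegAux_ge2 rest h.2 (fun y hy => hmem y (by simp [hy])) x hx

lemma ok_of_len : ∀ (n : ℕ) (l : List ℤ), l.length = 2 * n →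
    (∀ x ∈ l.tail, 1 ≤ x) → Ok l
  | 0, [], _, _ => trivial
  | n + 1, a :: b :: rest, hlen, hmem => by
    refine ⟨hmem b (by simp), ok_of_len n rest (by simp at hlen; omega) ?_⟩
    intro x hx
    exact hmem x (List.mem_cons_of_mem b (List.mem_of_mem_tail hx))
  | 0, a :: rest, hlen, _ => by simp at hlen
  | n + 1, [], hlen, _ => by simp at hlen
  | n + 1, [a], hlen, _ => by simp at hlen; omega

lemma negCF_shift (x : ℤ) (L : List ℤ) :
    negCF ((x + 1) :: L) = negCF ((x + 2) :: L) - 1 := by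
  cases L with
  | nil =>
    show ((x + 1 : ℤ) : ℚ) = ((x + 2 : ℤ) : ℚ) - 1
    push_cast; ring
  | cons y t =>
    show ((x + 1 : ℤ) : ℚ) - 1 / negCF (y :: t) = (((x + 2 : ℤ) : ℚ) - 1 / negCF (y :: t)) - 1
    push_cast; ring
lemma sigma_merge (a1 : ℤ) : σ1 * σ1 ^ (-(a1 + 2)) = σ1 ^ (-(a1 + 1)) :=
  calc σ1 * σ1 ^ (-(a1 + 2)) = σ1 ^ (1 : ℤ) * σ1 ^ (-(a1 + 2)) := by rw [zpow_one]
    _ = σ1 ^ (1 + -(a1 + 2)) := (zpow_add σ1 1 _).symm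
    _ = σ1 ^ (-(a1 + 1)) := by rw [show (1 + -(a1 + 2) : ℤ) = -(a1 + 1) by ring]
set_option synthInstance.maxHeartbeats 1000000 in
/-- if the regular and negative continued fraction values coincide,
then q^{a_2+a_4+⋯+a_{2m}}·σ_{1,q}^{-a_1}σ_{2,q}^{a_2}⋯σ_{1,q}^{-a_{2m-1}}σ_{2,q}^{a_{2m}}
= σ_{1,q}^{-c_1}S_q⋯σ_{1,q}^{-c_k}S_q·σ_{1,q}^{-1}. -/
theorem prodReg_eq_prodCS (m : ℕ) (hm : 1 ≤ m) (a1 : ℤ) (as : List ℤ)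
    (hlen : (a1 :: as).length = 2 * m)
    (ha1 : 0 ≤ a1) (has : ∀ x ∈ as, 1 ≤ x)
    (c1 : ℤ) (cs : List ℤ) (hc1 : 1 ≤ c1) (hcs : ∀ x ∈ cs, 2 ≤ x)
    (hval : regCF (a1 :: as) = negCF (c1 :: cs)) :
    (q ^ evenSum (a1 :: as) • (prodReg (a1 :: as) : Matrix (Fin 2) (Fin 2) K)
        : Matrix (Fin 2) (Fin 2) K)
      = ((prodCS (c1 :: cs) * σ1⁻¹ : (Matrix (Fin 2) (Fin 2) K)ˣ)
          : Matrix (Fin 2) (Fin 2) K) := by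
  obtain ⟨a2, rest, rfl⟩ : ∃ a2 rest, as = a2 :: rest := by
    cases as with
    | nil => simp at hlen; omega
    | cons a2 rest => exact ⟨a2, rest, rfl⟩
  have hOk : Ok (a1 :: a2 :: rest) := ok_of_len m _ hlen has
  have hmem : ∀ x ∈ a2 :: rest, 1 ≤ x := has
  have hmat := matAux a1 a2 rest hOk
  have hval2 := valAux a1 a2 rest hOk hmem
  set tl : List ℤ := List.replicate (a2 - 1).toNat 2 ++ toNegAux rest with htl
  have hsh : toNegAux (a1 :: a2 :: rest) = (a1 + 2) :: tl := rfl
  have htail2 : ∀ x ∈ tl, 2 ≤ x := by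
    intro x hx
    rw [htl] at hx; simp only [List.mem_append] at hx
    rcases hx with hx | hx
    · have := List.eq_of_mem_replicate hx; omega
    · exact toNegAux_ge2 rest hOk.2 (fun y hy => hmem y (by simp [hy])) x hx
  have hv : negCF ((a1 + 1) :: tl) = negCF (c1 :: cs) := by
    rw [negCF_shift, ← hsh, hval2, ← hval]
    ring
  have hlist : (a1 + 1) :: tl = c1 :: cs := negCF_inj tl (a1 + 1) cs c1 htail2 hcs hv
  have hunits : Qm ^ evenSum (a1 :: a2 :: rest) * prodReg (a1 :: a2 :: rest)
      = prodCS ((a1 + 1) :: tl) * σ1⁻¹ := by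
    rw [hmat, hsh, prodCS_cons, prodCS_cons]
    simp only [← mul_assoc]
    rw [sigma_merge]
  rw [hlist] at hunits
  have hfin := congrArg Units.val hunits
  rw [Units.val_mul, Qm_val, Algebra.algebraMap_eq_smul_one, smul_mul_assoc, one_mul] at hfin
  exact hfin
end
end

section
/- For integers c_1 ≥ 1 and c_2, …, c_k ≥ 2, the right q-deformed negative continued fraction equals the quotient of right q-deformed Euler continuants: [[c_1,…,c_k]]^♯_q = E^♯_k(c_1,…,c_k)_q / E^♯_{k−1}(c_2,…,c_k)_q in ℚ(q). -/
noncomputable section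

namespace Aux17

open Polynomial

/-- Geometric polynomial `1 + X + ... + X^(n-1)`. -/
def g (n : ℕ) : Polynomial ℚ := ∑ i ∈ Finset.range n, Polynomial.X ^ i

/-- Polynomial model of the right q-continuant. -/
def P : List ℤ → Polynomial ℚ
  | [] => 1
  | [c] => g c.toNat
  | c :: d :: rest => g c.toNat * P (d :: rest) - Polynomial.X ^ (c - 1).toNat * P rest

lemma one_sub_q_ne : (1 : K) - q ≠ 0 := by
  intro h
  have h' : (q : K) = 1 := by linear_combination -h
  rw [q, ← RatFunc.algebraMap_X (K := ℚ), show (1:K) = algebraMap (Polynomial ℚ) K 1 by simp] at h'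
  have hx : (Polynomial.X : Polynomial ℚ) = 1 := (RatFunc.algebraMap_injective ℚ) h'
  simpa using congrArg Polynomial.natDegree hx

lemma pow_int_eq (c : ℤ) (hc : 0 ≤ c) :
    (q : K) ^ c = algebraMap (Polynomial ℚ) K (Polynomial.X ^ c.toNat) := by
  lift c to ℕ using hc
  rw [Int.toNat_natCast, zpow_natCast, map_pow, RatFunc.algebraMap_X, q]

lemma g_mul : ∀ n : ℕ, g n * (1 - Polynomial.X) = 1 - (Polynomial.X : Polynomial ℚ) ^ n := by
  intro n
  have h := geom_sum_mul (Polynomial.X : Polynomial ℚ) n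
  unfold g
  linear_combination -h

lemma qs_eq (c : ℤ) (hc : 0 ≤ c) : qs c = algebraMap (Polynomial ℚ) K (g c.toNat) := by
  rw [qs, qsX, pow_int_eq c hc, div_eq_iff one_sub_q_ne]
  have hq : (q : K) = algebraMap (Polynomial ℚ) K Polynomial.X := (RatFunc.algebraMap_X).symm
  rw [hq, show (1:K) = algebraMap (Polynomial ℚ) K 1 by simp, ← map_sub, ← map_sub, ← map_mul]
  exact congrArg _ (g_mul c.toNat).symm

lemma esharp_eq : ∀ L : List ℤ, (∀ x ∈ L, 1 ≤ x) →
    Esharp L = algebraMap (Polynomial ℚ) K (P L)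
  | [], _ => by simp [Esharp, EsharpX, P]
  | [c], h => by
    have hc : (0:ℤ) ≤ c := le_trans zero_le_one (h c (by simp))
    show qsX q c = _
    rw [← qs, qs_eq c hc, P]
  | c :: d :: rest, h => by
    have hc : (1:ℤ) ≤ c := h c (by simp)
    have h1 : ∀ x ∈ d :: rest, (1:ℤ) ≤ x := fun x hx => h x (by simp [hx])
    have h2 : ∀ x ∈ rest, (1:ℤ) ≤ x := fun x hx => h x (by simp [hx])
    show qsX q c * EsharpX q (d :: rest) - q ^ (c - 1) * EsharpX q rest = _
    rw [show EsharpX q (d :: rest) = Esharp (d :: rest) from rfl,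
        show EsharpX q rest = Esharp rest from rfl,
        esharp_eq (d :: rest) h1, esharp_eq rest h2, ← qs, qs_eq c (by linarith),
        pow_int_eq (c - 1) (by linarith), P]
    rw [map_sub, map_mul, map_mul]

lemma coeff0 : ∀ L : List ℤ, (∀ x ∈ L, 2 ≤ x) → (P L).coeff 0 = 1
  | [], _ => by simp [P]
  | [c], h => by
    have hc : (2:ℤ) ≤ c := h c (by simp)
    have hn : 0 < c.toNat := by omega
    simp [P, g, Polynomial.finset_sum_coeff, Polynomial.coeff_X_pow,
      Finset.sum_ite_eq', Finset.mem_range, hn]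
  | c :: d :: rest, h => by
    have hc : (2:ℤ) ≤ c := h c (by simp)
    have h1 : ∀ x ∈ d :: rest, (2:ℤ) ≤ x := fun x hx => h x (by simp [hx])
    have h2 : ∀ x ∈ rest, (2:ℤ) ≤ x := fun x hx => h x (by simp [hx])
    have hn : 0 < c.toNat := by omega
    have hm : 0 < (c - 1).toNat := by omega
    rw [P]
    rw [Polynomial.coeff_sub, Polynomial.mul_coeff_zero, Polynomial.mul_coeff_zero,
      coeff0 (d :: rest) h1, coeff0 rest h2]
    simp [g, Polynomial.finset_sum_coeff, Polynomial.coeff_X_pow,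
      Finset.sum_ite_eq', Finset.mem_range, hn, hm.ne']
    omega

lemma esharp_ne (L : List ℤ) (h : ∀ x ∈ L, 2 ≤ x) : Esharp L ≠ 0 := by
  rw [esharp_eq L (fun x hx => le_trans one_le_two (h x hx))]
  intro hz
  have : P L = 0 := (RatFunc.algebraMap_injective ℚ) (by simpa using hz)
  have h0 := coeff0 L h
  rw [this] at h0
  simp at h0

lemma main : ∀ (cs : List ℤ), (∀ x ∈ cs, 2 ≤ x) → ∀ c1 : ℤ,
    nsharp (c1 :: cs) = Esharp (c1 :: cs) / Esharp cs
  | [], _, c1 => by simp [nsharp, Esharp, EsharpX, qs]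
  | d :: rest, h, c1 => by
    have h2 : ∀ x ∈ rest, (2:ℤ) ≤ x := fun x hx => h x (by simp [hx])
    have ih := main rest h2 d
    have hA : Esharp (d :: rest) ≠ 0 := esharp_ne _ h
    have hB : Esharp rest ≠ 0 := esharp_ne _ h2
    show qs c1 - q ^ (c1 - 1) / nsharp (d :: rest) = _
    rw [ih, show Esharp (c1 :: d :: rest)
        = qs c1 * Esharp (d :: rest) - q ^ (c1 - 1) * Esharp rest from rfl]
    field_simp

end Aux17

/-- the right q-deformed negative continued fraction is the quotient of
right q-deformed Euler continuants. -/
theorem nsharp_eq_Esharp_div (c1 : ℤ) (cs : List ℤ)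
    (hc1 : 1 ≤ c1) (hcs : ∀ x ∈ cs, 2 ≤ x) :
    nsharp (c1 :: cs) = Esharp (c1 :: cs) / Esharp cs :=
  Aux17.main cs hcs c1
end
end
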